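/- Let V : L^1([0,1]) → C([0,1]) be the Volterra operator. For every integer n ≥ 2, the n-th approximation number of V equals 1/2: inf{‖V − S‖ : S : L^1([0,1]) → C([0,1]) a bounded linear operator with rank(S) ≤ n − 1} = 1/2. -/

import Mathlib

/-!
Upper bound: the rank-one operator `S f = (∫ f) / 2 · 1` gives
`(V - S) f (x) = (∫₀ˣ f - ∫ₓ¹ f) / 2`, whose absolute value is at most `‖f‖₁ / 2`.

Lower bound: the normalized indicators `u k` of the dyadic intervals `(2⁻ᵏ⁻¹, 2⁻ᵏ]` are unit
vectors with `‖V (u j - u k)‖ ≥ 1` for `j ≠ k` (evaluate at the right endpoint of the smaller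
interval). A compact `S` maps them into a compact set, so some `S (u j)` and `S (u k)` with
`j ≠ k` are `ε`-close, and then `1 ≤ ‖(V - S) (u j - u k)‖ + ε ≤ 2 ‖V - S‖ + ε`.
-/

open MeasureTheory Set

noncomputable def mu01 : Measure ℝ := volume.restrict (Icc (0:ℝ) 1)

theorem IsCompact.exists_ne_dist_lt {α : Type*} [PseudoMetricSpace α] {K : Set α}
    (hK : IsCompact K) {x : ℕ → α} (hx : ∀ n, x n ∈ K) {ε : ℝ} (hε : 0 < ε) :
    ∃ j k, j ≠ k ∧ dist (x j) (x k) < ε := by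
  obtain ⟨a, -, φ, hφ, hlim⟩ := hK.tendsto_subseq hx
  obtain ⟨N, hN⟩ := Metric.cauchySeq_iff'.1 hlim.cauchySeq ε hε
  exact ⟨φ (N + 1), φ N, (hφ N.lt_succ_self).ne', hN (N + 1) N.le_succ⟩

theorem isCompactOperator_of_finiteDimensional_range {𝕜 E F : Type*} [NontriviallyNormedField 𝕜]
    [LocallyCompactSpace 𝕜] [NormedAddCommGroup E] [NormedSpace 𝕜 E]
    [NormedAddCommGroup F] [NormedSpace 𝕜 F] (S : E →L[𝕜] F)
    [FiniteDimensional 𝕜 (LinearMap.range (S : E →ₗ[𝕜] F))] : IsCompactOperator S := by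
  have : ProperSpace (LinearMap.range (S : E →ₗ[𝕜] F)) := FiniteDimensional.proper 𝕜 _
  exact (isCompactOperator_of_locallyCompactSpace_dom
    (S.codRestrict _ (LinearMap.mem_range_self (S : E →ₗ[𝕜] F)))).continuous_comp
    continuous_subtype_val

theorem le_two_mul_opNorm_sub_of_isCompactOperator {𝕜 E F : Type*} [NontriviallyNormedField 𝕜]
    [NormedAddCommGroup E] [NormedSpace 𝕜 E] [NormedAddCommGroup F] [NormedSpace 𝕜 F]
    {V S : E →L[𝕜] F} (hS : IsCompactOperator S)
    {u : ℕ → E} (hu : ∀ k, ‖u k‖ ≤ 1) {δ : ℝ} (hsep : Pairwise fun j k ↦ δ ≤ ‖V (u j - u k)‖) :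
    δ ≤ 2 * ‖V - S‖ := by
  refine le_of_forall_pos_le_add fun ε hε ↦ ?_
  obtain ⟨j, k, hjk, hclose⟩ := (hS.isCompact_closure_image_closedBall 1).exists_ne_dist_lt
    (fun n ↦ subset_closure (mem_image_of_mem S (mem_closedBall_zero_iff.2 (hu n)))) hε
  have hdiff : ‖u j - u k‖ ≤ 2 := (norm_sub_le _ _).trans (by linarith [hu j, hu k])
  calc δ ≤ ‖V (u j - u k)‖ := hsep hjk
    _ = ‖(V - S) (u j - u k) + (S (u j) - S (u k))‖ := by simp
    _ ≤ ‖V - S‖ * ‖u j - u k‖ + dist (S (u j)) (S (u k)) :=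
        (norm_add_le _ _).trans (add_le_add ((V - S).le_opNorm _) (dist_eq_norm _ _).ge)
    _ ≤ 2 * ‖V - S‖ + ε :=
        add_le_add (by nlinarith [norm_nonneg (V - S)]) hclose.le

theorem ContinuousLinearMap.range_smulRight_le_span_singleton {𝕜 E F : Type*} [Semiring 𝕜]
    [TopologicalSpace 𝕜] [TopologicalSpace E] [AddCommMonoid E] [Module 𝕜 E]
    [TopologicalSpace F] [AddCommMonoid F] [Module 𝕜 F] [ContinuousSMul 𝕜 F]
    (c : E →L[𝕜] 𝕜) (f : F) :
    LinearMap.range (c.smulRight f : E →ₗ[𝕜] F) ≤ 𝕜 ∙ f := by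
  rintro _ ⟨x, rfl⟩
  exact Submodule.mem_span_singleton.2 ⟨c x, rfl⟩

theorem finrank_span_singleton_le_one {𝕜 F : Type*} [DivisionRing 𝕜] [AddCommGroup F]
    [Module 𝕜 F] (f : F) : Module.finrank 𝕜 (𝕜 ∙ f) ≤ 1 := by
  simpa using finrank_span_le_card (R := 𝕜) ({f} : Set F)

theorem abs_setIntegral_sub_setIntegral_compl_le {α : Type*} [MeasurableSpace α] {μ : Measure α}
    {s : Set α} (hs : MeasurableSet s) {f : α → ℝ} (hf : Integrable f μ) :
    |∫ x in s, f x ∂μ - ∫ x in sᶜ, f x ∂μ| ≤ ∫ x, ‖f x‖ ∂μ :=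
  calc |∫ x in s, f x ∂μ - ∫ x in sᶜ, f x ∂μ|
      ≤ ‖∫ x in s, f x ∂μ‖ + ‖∫ x in sᶜ, f x ∂μ‖ := abs_sub _ _
    _ ≤ ∫ x in s, ‖f x‖ ∂μ + ∫ x in sᶜ, ‖f x‖ ∂μ :=
        add_le_add (norm_integral_le_integral_norm _) (norm_integral_le_integral_norm _)
    _ = ∫ x, ‖f x‖ ∂μ := integral_add_compl hs hf.norm

instance : IsFiniteMeasure mu01 := by
  rw [mu01]
  infer_instance

lemma mu01_Ioc {a b : ℝ} (ha : 0 ≤ a) (hb : b ≤ 1) : mu01 (Ioc a b) = ENNReal.ofReal (b - a) := by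
  rw [mu01, Measure.restrict_apply measurableSet_Ioc,
    inter_eq_left.2 (Ioc_subset_Icc_self.trans (Icc_subset_Icc ha hb)), Real.volume_Ioc]

noncomputable def normalizedIndicatorIoc (a b : ℝ) : Lp ℝ 1 mu01 :=
  indicatorConstLp 1 measurableSet_Ioc (measure_ne_top mu01 (Ioc a b)) (b - a)⁻¹

section normalizedIndicatorIoc

variable {a b : ℝ}

lemma norm_normalizedIndicatorIoc (ha : 0 ≤ a) (hab : a < b) (hb : b ≤ 1) :
    ‖normalizedIndicatorIoc a b‖ = 1 := by
  have hba : 0 < b - a := sub_pos.2 hab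
  rw [normalizedIndicatorIoc, norm_indicatorConstLp one_ne_zero ENNReal.one_ne_top,
    measureReal_def, mu01_Ioc ha hb, ENNReal.toReal_ofReal hba.le]
  simp [abs_of_pos hba, hba.ne']

lemma setIntegral_normalizedIndicatorIoc (x : ℝ) :
    ∫ t in Ioc 0 x, normalizedIndicatorIoc a b t ∂mu01 =
      mu01.real (Ioc a b ∩ Ioc 0 x) * (b - a)⁻¹ :=
  setIntegral_indicatorConstLp measurableSet_Ioc measurableSet_Ioc _ _

lemma setIntegral_normalizedIndicatorIoc_of_le {x : ℝ} (hx : x ≤ a) :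
    ∫ t in Ioc 0 x, normalizedIndicatorIoc a b t ∂mu01 = 0 := by
  have hdisj : Ioc a b ∩ Ioc 0 x = ∅ :=
    eq_empty_of_forall_notMem fun t ⟨⟨hat, _⟩, ⟨_, htx⟩⟩ ↦ (hat.trans_le (htx.trans hx)).false
  simp [setIntegral_normalizedIndicatorIoc, hdisj]

lemma setIntegral_normalizedIndicatorIoc_self (ha : 0 ≤ a) (hab : a < b) (hb : b ≤ 1) :
    ∫ t in Ioc 0 b, normalizedIndicatorIoc a b t ∂mu01 = 1 := by
  have hba : 0 < b - a := sub_pos.2 hab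
  rw [setIntegral_normalizedIndicatorIoc, inter_eq_left.2 (Ioc_subset_Ioc_left ha),
    measureReal_def, mu01_Ioc ha hb, ENNReal.toReal_ofReal hba.le, mul_inv_cancel₀ hba.ne']

end normalizedIndicatorIoc

noncomputable def dyadicBump (k : ℕ) : Lp ℝ 1 mu01 :=
  normalizedIndicatorIoc (2⁻¹ ^ (k + 1)) (2⁻¹ ^ k)

lemma dyadic_endpoint_bounds (k : ℕ) : 0 ≤ (2⁻¹ : ℝ) ^ (k + 1) ∧ (2⁻¹ : ℝ) ^ (k + 1) < 2⁻¹ ^ k ∧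
    (2⁻¹ : ℝ) ^ k ≤ 1 :=
  ⟨by positivity, pow_lt_pow_right_of_lt_one₀ (by norm_num) (by norm_num) k.lt_succ_self,
    pow_le_one₀ (by norm_num) (by norm_num)⟩

lemma norm_dyadicBump (k : ℕ) : ‖dyadicBump k‖ = 1 :=
  let ⟨h₀, h₁, h₂⟩ := dyadic_endpoint_bounds k
  norm_normalizedIndicatorIoc h₀ h₁ h₂

noncomputable def halfMean : Lp ℝ 1 mu01 →L[ℝ] C(Icc (0:ℝ) 1, ℝ) :=
  (L1.integralCLM (μ := mu01)).smulRight (ContinuousMap.const _ (1 / 2))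

lemma halfMean_apply (f : Lp ℝ 1 mu01) (x : Icc (0:ℝ) 1) :
    halfMean f x = (∫ t, f t ∂mu01) / 2 := by
  rw [halfMean, ContinuousLinearMap.smulRight_apply, ContinuousMap.smul_apply,
    ← L1.integral_eq_integral, L1.integral_eq, ContinuousMap.const_apply, smul_eq_mul, mul_one_div]

lemma range_halfMean_le :
    LinearMap.range (halfMean : Lp ℝ 1 mu01 →ₗ[ℝ] C(Icc (0:ℝ) 1, ℝ)) ≤
      ℝ ∙ ContinuousMap.const _ (1 / 2) :=
  ContinuousLinearMap.range_smulRight_le_span_singleton _ _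

instance : FiniteDimensional ℝ (LinearMap.range (halfMean : Lp ℝ 1 mu01 →ₗ[ℝ] C(Icc (0:ℝ) 1, ℝ))) :=
  Submodule.finiteDimensional_of_le range_halfMean_le

lemma finrank_range_halfMean_le_one :
    Module.finrank ℝ (LinearMap.range (halfMean : Lp ℝ 1 mu01 →ₗ[ℝ] C(Icc (0:ℝ) 1, ℝ))) ≤ 1 :=
  (Submodule.finrank_mono range_halfMean_le).trans (finrank_span_singleton_le_one _)

def IsVolterraOperator (V : Lp ℝ 1 mu01 →L[ℝ] C(Icc (0:ℝ) 1, ℝ)) : Prop :=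
  ∀ (f : Lp ℝ 1 mu01) (x : Icc (0:ℝ) 1), V f x = ∫ t in Ioc (0:ℝ) (x:ℝ), (f : ℝ → ℝ) t ∂mu01

namespace IsVolterraOperator

variable {V : Lp ℝ 1 mu01 →L[ℝ] C(Icc (0:ℝ) 1, ℝ)}

lemma one_le_norm_sub_dyadicBump (hV : IsVolterraOperator V) :
    Pairwise fun j k ↦ 1 ≤ ‖V (dyadicBump j - dyadicBump k)‖ := by
  suffices h : ∀ j k, j < k → 1 ≤ ‖V (dyadicBump j - dyadicBump k)‖ by
    intro j k hjk
    rcases hjk.lt_or_gt with hlt | hlt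
    · exact h j k hlt
    · rw [← norm_neg, ← map_neg, neg_sub]
      exact h k j hlt
  intro j k hjk
  obtain ⟨h₀, h₁, h₂⟩ := dyadic_endpoint_bounds k
  have hkj : (2⁻¹ : ℝ) ^ k ≤ 2⁻¹ ^ (j + 1) := pow_le_pow_of_le_one (by norm_num) (by norm_num) hjk
  calc (1 : ℝ) = |V (dyadicBump j - dyadicBump k) ⟨2⁻¹ ^ k, h₀.trans h₁.le, h₂⟩| := by
        rw [map_sub, ContinuousMap.sub_apply, hV, hV, dyadicBump, dyadicBump,
          setIntegral_normalizedIndicatorIoc_of_le hkj,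
          setIntegral_normalizedIndicatorIoc_self h₀ h₁ h₂]
        norm_num
    _ ≤ _ := (Real.norm_eq_abs _).ge.trans (ContinuousMap.norm_coe_le_norm _ _)

lemma half_le_norm_sub (hV : IsVolterraOperator V) {S : Lp ℝ 1 mu01 →L[ℝ] C(Icc (0:ℝ) 1, ℝ)}
    (hS : IsCompactOperator S) : 1 / 2 ≤ ‖V - S‖ := by
  have := le_two_mul_opNorm_sub_of_isCompactOperator hS (fun k ↦ (norm_dyadicBump k).le)
    hV.one_le_norm_sub_dyadicBump
  linarith

lemma norm_sub_halfMean_le (hV : IsVolterraOperator V) : ‖V - halfMean‖ ≤ 1 / 2 := by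
  refine ContinuousLinearMap.opNorm_le_bound _ (by norm_num) fun f ↦ ?_
  refine (ContinuousMap.norm_le _ (by positivity)).2 fun x ↦ ?_
  have hf : Integrable f mu01 := L1.integrable_coeFn f
  have hsplit := integral_add_compl (μ := mu01) (measurableSet_Ioc (a := 0) (b := (x : ℝ))) hf
  rw [sub_apply, ContinuousMap.sub_apply, hV, halfMean_apply, ← hsplit,
    Real.norm_eq_abs, L1.norm_eq_integral_norm]
  have := abs_setIntegral_sub_setIntegral_compl_le (μ := mu01) measurableSet_Ioc hf (s := Ioc 0 x)
  rw [show ∀ A B : ℝ, A - (A + B) / 2 = (A - B) / 2 by intros; ring, abs_div, abs_two]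
  linarith

end IsVolterraOperator

theorem volterra_approximationNumber_eq_half
    (V : Lp ℝ 1 mu01 →L[ℝ] C(Icc (0:ℝ) 1, ℝ))
    (hV : ∀ (f : Lp ℝ 1 mu01) (x : Icc (0:ℝ) 1),
      V f x = ∫ t in Ioc (0:ℝ) (x:ℝ), (f : ℝ → ℝ) t ∂mu01)
    (n : ℕ) (hn : 2 ≤ n) :
    sInf {c : ℝ | ∃ S : Lp ℝ 1 mu01 →L[ℝ] C(Icc (0:ℝ) 1, ℝ),
      FiniteDimensional ℝ (LinearMap.range (S : Lp ℝ 1 mu01 →ₗ[ℝ] C(Icc (0:ℝ) 1, ℝ))) ∧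
      Module.finrank ℝ (LinearMap.range (S : Lp ℝ 1 mu01 →ₗ[ℝ] C(Icc (0:ℝ) 1, ℝ))) ≤ n - 1 ∧
      c = ‖V - S‖} = 1/2 := by
  have hV' : IsVolterraOperator V := hV
  have hrank : Module.finrank ℝ (LinearMap.range
      (halfMean : Lp ℝ 1 mu01 →ₗ[ℝ] C(Icc (0:ℝ) 1, ℝ))) ≤ n - 1 :=
    finrank_range_halfMean_le_one.trans (by omega)
  have hnorm : ‖V - halfMean‖ = 1 / 2 :=
    hV'.norm_sub_halfMean_le.antisymm
      (hV'.half_le_norm_sub (isCompactOperator_of_finiteDimensional_range _))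
  refine IsLeast.csInf_eq ⟨⟨halfMean, inferInstance, hrank, hnorm.symm⟩, ?_⟩
  rintro _ ⟨S, hS, -, rfl⟩
  exact hV'.half_le_norm_sub (isCompactOperator_of_finiteDimensional_range S)
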